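/- arXiv:2602.21321 — 5 statements merged into one kernel-verified Lean document; each statement's English description precedes it below -/
import Mathlib

section
/- One-step expected descent of the stochastic zero-shifting update: for every W ∈ ℝ^D, the average over all sign vectors s ∈ {−1,1}^D of φ(W + Δ·(s ⊙ F(W)) − Δ·G(W)) is at most φ(W) − Δ‖G(W)‖² + L_q·Δ²·q_max². That is, 2^{−D} · Σ_{s ∈ {−1,1}^D} φ(W + Δ·(s ⊙ F(W)) − Δ·G(W)) ≤ φ(W) − Δ‖G(W)‖² + L_q·Δ²·q_max². -/
noncomputable section

open scoped BigOperators

/-- Coordinatewise (Hadamard) product on Euclidean space. -/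
def had {D : ℕ} (x y : EuclideanSpace ℝ (Fin D)) : EuclideanSpace ℝ (Fin D) :=
  WithLp.toLp 2 (fun d => x d * y d)

/-- The ±1 sign vector associated to a boolean vector. -/
def sgn {D : ℕ} (s : Fin D → Bool) : EuclideanSpace ℝ (Fin D) :=
  WithLp.toLp 2 (fun d => if s d then (1 : ℝ) else -1)

/-!
Averaging the descent inequality `φ (W + v) ≤ φ W + ⟪∇φ W, v⟫ + L_q ‖v‖²` (mean value inequality
on `[W, W + v]`) over the steps `v_s = Δ (s ⊙ F W - G W)` turns the linear term into the inner
product with the averaged step. Flipping one sign is a bijection of `{-1, 1}^D`, so `s ⊙ F W`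
averages to zero while keeping its norm: the averaged step is `-Δ G W` and the mean square step is
`Δ² (‖F W‖² + ‖G W‖²)`, which the parallelogram law bounds by `Δ² q_max²`.
-/

open InnerProductSpace

section Descent

variable {E : Type*} [NormedAddCommGroup E] [InnerProductSpace ℝ E] [CompleteSpace E]
  {f : E → ℝ} {g : E → E} {L : ℝ}

theorem le_add_inner_add_mul_norm_sq_of_hasGradientAt (hL : 0 ≤ L)
    (hf : ∀ x, HasGradientAt f (g x) x) (hg : ∀ x y, ‖g x - g y‖ ≤ L * ‖x - y‖) (x v : E) :
    f (x + v) ≤ f x + ⟪g x, v⟫_ℝ + L * ‖v‖ ^ 2 := by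
  have hbound : ∀ z ∈ segment ℝ x (x + v), ‖toDual ℝ E (g z) - toDual ℝ E (g x)‖ ≤ L * ‖v‖ :=
    fun z hz => calc
      ‖toDual ℝ E (g z) - toDual ℝ E (g x)‖ = ‖g z - g x‖ := by
        rw [← map_sub, LinearIsometryEquiv.norm_map]
      _ ≤ L * ‖z - x‖ := hg z x
      _ ≤ L * ‖v‖ := by
        gcongr
        simpa using norm_sub_le_of_mem_segment hz
  have hmv := (convex_segment x (x + v)).norm_image_sub_le_of_norm_hasFDerivWithin_le'
    (fun z _ => (hf z).hasFDerivAt.hasFDerivWithinAt) hbound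
    (left_mem_segment ℝ x (x + v)) (right_mem_segment ℝ x (x + v))
  rw [add_sub_cancel_left, toDual_apply_apply] at hmv
  linarith [(abs_le.mp (Real.norm_eq_abs _ ▸ hmv)).2]

theorem inv_card_mul_sum_le_of_hasGradientAt {ι : Type*} [Fintype ι] [Nonempty ι] (hL : 0 ≤ L)
    (hf : ∀ x, HasGradientAt f (g x) x)
    (hg : ∀ x y, ‖g x - g y‖ ≤ L * ‖x - y‖) (x : E) (v : ι → E) :
    (Fintype.card ι : ℝ)⁻¹ * ∑ i, f (x + v i) ≤
      f x + ⟪g x, (Fintype.card ι : ℝ)⁻¹ • ∑ i, v i⟫_ℝ +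
        L * ((Fintype.card ι : ℝ)⁻¹ * ∑ i, ‖v i‖ ^ 2) := by
  have hsum : ∑ i, f (x + v i) ≤ ∑ i, (f x + ⟪g x, v i⟫_ℝ + L * ‖v i‖ ^ 2) :=
    Finset.sum_le_sum fun i _ => le_add_inner_add_mul_norm_sq_of_hasGradientAt hL hf hg x (v i)
  have hcard : (0 : ℝ) < Fintype.card ι := by exact_mod_cast Fintype.card_pos
  rw [Finset.sum_add_distrib, Finset.sum_add_distrib, Finset.sum_const, Finset.card_univ,
    nsmul_eq_mul, ← inner_sum, ← Finset.mul_sum] at hsum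
  rw [inner_smul_right, ← mul_le_mul_iff_of_pos_left hcard]
  field_simp
  linarith

end Descent

theorem norm_half_add_sq_add_norm_half_sub_sq_le {E : Type*} [NormedAddCommGroup E]
    [InnerProductSpace ℝ E] {a b : E} {r : ℝ} (ha : ‖a‖ ≤ r) (hb : ‖b‖ ≤ r) :
    ‖(1 / 2 : ℝ) • (a + b)‖ ^ 2 + ‖(1 / 2 : ℝ) • (a - b)‖ ^ 2 ≤ r ^ 2 := by
  have hpar := parallelogram_law_with_norm ℝ a b
  rw [norm_smul, norm_smul, mul_pow, mul_pow]
  norm_num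
  nlinarith [pow_le_pow_left₀ (norm_nonneg a) ha 2, pow_le_pow_left₀ (norm_nonneg b) hb 2]

section SignVectors

variable {D : ℕ}

theorem sum_sgn_apply (d : Fin D) : ∑ s : Fin D → Bool, sgn s d = 0 := by
  let flip : Equiv.Perm (Fin D → Bool) :=
    Equiv.piCongrRight fun e => if e = d then Equiv.boolNot else Equiv.refl Bool
  have hflip : ∀ s, sgn (flip s) d = -sgn s d := fun s => by
    cases h : s d <;> simp [flip, sgn, h]
  have h := Equiv.sum_comp flip fun s => sgn s d
  simp only [hflip, Finset.sum_neg_distrib] at h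
  linarith

theorem norm_had_sgn (s : Fin D → Bool) (x : EuclideanSpace ℝ (Fin D)) :
    ‖had (sgn s) x‖ = ‖x‖ := by
  simp only [EuclideanSpace.norm_eq, had, sgn, norm_mul]
  congr 1
  refine Finset.sum_congr rfl fun d _ => ?_
  split_ifs <;> simp

theorem sum_had_sgn (x : EuclideanSpace ℝ (Fin D)) : ∑ s : Fin D → Bool, had (sgn s) x = 0 := by
  ext d
  simp only [WithLp.ofLp_sum, Finset.sum_apply, had, ← Finset.sum_mul]
  simp [sum_sgn_apply]

theorem inv_two_pow_smul_sum_smul_had_sgn_sub (Δ : ℝ) (x y : EuclideanSpace ℝ (Fin D)) :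
    ((2 : ℝ) ^ D)⁻¹ • ∑ s : Fin D → Bool, Δ • (had (sgn s) x - y) = -(Δ • y) := by
  have hsum : ∑ s : Fin D → Bool, (had (sgn s) x - y) = -(((2 : ℝ) ^ D) • y) := by
    rw [Finset.sum_sub_distrib, sum_had_sgn, Finset.sum_const, Finset.card_univ,
      ← Nat.cast_smul_eq_nsmul ℝ, zero_sub]
    simp
  rw [← Finset.smul_sum, hsum, smul_neg, smul_neg, smul_smul, smul_smul,
    mul_comm _ Δ, mul_assoc, inv_mul_cancel₀ (by positivity), mul_one]

theorem inv_two_pow_mul_sum_norm_smul_had_sgn_sub_sq (Δ : ℝ) (x y : EuclideanSpace ℝ (Fin D)) :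
    ((2 : ℝ) ^ D)⁻¹ * ∑ s : Fin D → Bool, ‖Δ • (had (sgn s) x - y)‖ ^ 2 =
      Δ ^ 2 * (‖x‖ ^ 2 + ‖y‖ ^ 2) := by
  simp only [norm_smul, mul_pow, Real.norm_eq_abs, sq_abs, norm_sub_sq_real, norm_had_sgn,
    ← Finset.mul_sum, Finset.sum_add_distrib, Finset.sum_sub_distrib, ← sum_inner,
    sum_had_sgn, inner_zero_left, Finset.sum_const, Finset.card_univ, Fintype.card_fun,
    Fintype.card_bool, Fintype.card_fin, nsmul_eq_mul]
  field_simp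
  push_cast
  ring

end SignVectors

theorem zero_shifting_one_step_descent_general
    (D : ℕ) (Δ qmax Lq : ℝ) (hLq : 0 < Lq)
    (Qp Qm : EuclideanSpace ℝ (Fin D) → EuclideanSpace ℝ (Fin D))
    (hQp : ∀ W, ‖Qp W‖ ≤ qmax) (hQm : ∀ W, ‖Qm W‖ ≤ qmax)
    (F G : EuclideanSpace ℝ (Fin D) → EuclideanSpace ℝ (Fin D))
    (hF : ∀ W, F W = (1 / 2 : ℝ) • (Qm W + Qp W))
    (hG : ∀ W, G W = (1 / 2 : ℝ) • (Qm W - Qp W))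
    (φ : EuclideanSpace ℝ (Fin D) → ℝ)
    (hgrad : ∀ W, HasGradientAt φ (G W) W)
    (hgradLip : ∀ U V, ‖G U - G V‖ ≤ Lq * ‖U - V‖)
    (W : EuclideanSpace ℝ (Fin D)) :
    ((2 : ℝ) ^ D)⁻¹ * ∑ s : Fin D → Bool, φ (W + Δ • had (sgn s) (F W) - Δ • G W)
      ≤ φ W - Δ * ‖G W‖ ^ 2 + Lq * Δ ^ 2 * qmax ^ 2 := by
  have hcard : (Fintype.card (Fin D → Bool) : ℝ) = 2 ^ D := by simp
  have hFG : ‖F W‖ ^ 2 + ‖G W‖ ^ 2 ≤ qmax ^ 2 := by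
    rw [hF, hG]
    exact norm_half_add_sq_add_norm_half_sub_sq_le (hQm W) (hQp W)
  simp only [add_sub_assoc, ← smul_sub]
  calc ((2 : ℝ) ^ D)⁻¹ * ∑ s : Fin D → Bool, φ (W + Δ • (had (sgn s) (F W) - G W))
      ≤ φ W + ⟪G W, ((2 : ℝ) ^ D)⁻¹ • ∑ s : Fin D → Bool, Δ • (had (sgn s) (F W) - G W)⟫_ℝ +
          Lq * (((2 : ℝ) ^ D)⁻¹ * ∑ s : Fin D → Bool, ‖Δ • (had (sgn s) (F W) - G W)‖ ^ 2) := by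
        simpa only [hcard] using
          inv_card_mul_sum_le_of_hasGradientAt (ι := Fin D → Bool) hLq.le hgrad hgradLip W _
    _ = φ W - Δ * ‖G W‖ ^ 2 + Lq * Δ ^ 2 * (‖F W‖ ^ 2 + ‖G W‖ ^ 2) := by
        rw [inv_two_pow_smul_sum_smul_had_sgn_sub, inv_two_pow_mul_sum_norm_smul_had_sgn_sub_sq,
          inner_neg_right, real_inner_smul_right, real_inner_self_eq_norm_sq]
        ring
    _ ≤ φ W - Δ * ‖G W‖ ^ 2 + Lq * Δ ^ 2 * qmax ^ 2 := by gcongr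

/-- One-step expected descent of the stochastic zero-shifting update: averaging the
pulse update over all `2^D` sign vectors decreases `φ` by `Δ‖G(W)‖²` up to an
`L_q Δ² q_max²` error term. -/
theorem zero_shifting_one_step_descent
    (D : ℕ) (hD : 1 ≤ D) (Δ qmax Lq : ℝ) (hΔ : 0 < Δ) (hq : 0 < qmax) (hLq : 0 < Lq)
    (Qp Qm : EuclideanSpace ℝ (Fin D) → EuclideanSpace ℝ (Fin D))
    (hQp : ∀ W, ‖Qp W‖ ≤ qmax) (hQm : ∀ W, ‖Qm W‖ ≤ qmax)
    (F G : EuclideanSpace ℝ (Fin D) → EuclideanSpace ℝ (Fin D))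
    (hF : ∀ W, F W = (1 / 2 : ℝ) • (Qm W + Qp W))
    (hG : ∀ W, G W = (1 / 2 : ℝ) • (Qm W - Qp W))
    (φ : EuclideanSpace ℝ (Fin D) → ℝ)
    (hgrad : ∀ W, HasGradientAt φ (G W) W)
    (hgradLip : ∀ U V, ‖G U - G V‖ ≤ Lq * ‖U - V‖)
    (W : EuclideanSpace ℝ (Fin D)) :
    ((2 : ℝ) ^ D)⁻¹ * ∑ s : Fin D → Bool, φ (W + Δ • had (sgn s) (F W) - Δ • G W)
      ≤ φ W - Δ * ‖G W‖ ^ 2 + Lq * Δ ^ 2 * qmax ^ 2 :=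
  zero_shifting_one_step_descent_general D Δ qmax Lq hLq Qp Qm hQp hQm F G hF hG φ hgrad hgradLip W
end
end

section
/- Convergence rate of the stochastic zero-shifting algorithm: fix W₀ ∈ ℝ^D and N ≥ 1. For each sequence of sign vectors s = (s₀, …, s_{N−1}) ∈ ({−1,1}^D)^N define iterates by W₀(s) := W₀ and W_{n+1}(s) := W_n(s) + Δ·(s_n ⊙ F(W_n(s))) − Δ·G(W_n(s)). Then the average over all 2^{DN} sign sequences s of (1/N)·Σ_{n=0}^{N−1} ‖G(W_n(s))‖² is at most (φ(W₀) − φ*)/(N·Δ) + L_q·Δ·q_max². -/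
noncomputable section

open scoped BigOperators

/-- Iterates of the stochastic zero-shifting algorithm driven by the sign
sequence `s` : `W_{n+1} = W_n + Δ·(s_n ⊙ F(W_n)) − Δ·G(W_n)`. -/
def zsIter {D : ℕ} (Δ : ℝ)
    (F G : EuclideanSpace ℝ (Fin D) → EuclideanSpace ℝ (Fin D))
    (W0 : EuclideanSpace ℝ (Fin D)) (s : ℕ → Fin D → Bool) : ℕ → EuclideanSpace ℝ (Fin D)
  | 0 => W0
  | n + 1 =>
      zsIter Δ F G W0 s n + Δ • had (sgn (s n)) (F (zsIter Δ F G W0 s n))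
        - Δ • G (zsIter Δ F G W0 s n)

/-!
Each step of the algorithm moves along `s ⊙ F(W) - G(W)`, whose coordinates are those of `Q₊(W)`
or of `-Q₋(W)`, so its squared norm is at most `2 q_max²`. The descent lemma for the
`L_q`-smooth potential `φ` then bounds `Δ ‖G(W_n)‖²` by the decrease `φ(W_n) - φ(W_{n+1})`,
plus `L_q Δ² q_max²`, plus the noise term `Δ ⟪G(W_n), s_n ⊙ F(W_n)⟫`. Since `W_n` depends only on
`s_0, …, s_{n-1}`, flipping `s_n` negates the noise term, so it averages to zero over all sign
sequences; telescoping and `φ ≥ φ*` finish the proof.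
-/

open scoped RealInnerProductSpace

section Descent

variable {E : Type*} [NormedAddCommGroup E] [InnerProductSpace ℝ E] [CompleteSpace E]
  {φ : E → ℝ} {g : E → E} {L Δ C : ℝ}

theorem le_add_inner_add_sq_of_lipschitz_gradient (hφ : ∀ x, HasGradientAt φ (g x) x)
    (hg : ∀ x y, ‖g x - g y‖ ≤ L * ‖x - y‖) (x y : E) :
    φ y ≤ φ x + ⟪g x, y - x⟫ + L / 2 * ‖y - x‖ ^ 2 := by
  set v := y - x
  let h : ℝ → ℝ := fun t => φ (x + t • v) - t * ⟪g x, v⟫ - L / 2 * t ^ 2 * ‖v‖ ^ 2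
  have hderiv : ∀ t, HasDerivAt h (⟪g (x + t • v) - g x, v⟫ - L * t * ‖v‖ ^ 2) t := by
    intro t
    have hline : HasDerivAt (fun t : ℝ => x + t • v) v t := by
      simpa using ((hasDerivAt_id t).smul_const v).const_add x
    have hφt := (hφ (x + t • v)).hasFDerivAt.comp_hasDerivAt t hline
    refine ((hφt.sub ((hasDerivAt_id t).mul_const ⟪g x, v⟫)).sub
      (((hasDerivAt_pow 2 t).const_mul (L / 2)).mul_const (‖v‖ ^ 2))).congr_deriv ?_
    rw [InnerProductSpace.toDual_apply_apply, inner_sub_left]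
    push_cast
    ring
  have hanti : AntitoneOn h (Set.Ici 0) := by
    refine antitoneOn_of_hasDerivWithinAt_nonpos (convex_Ici 0)
      (fun t _ => (hderiv t).continuousAt.continuousWithinAt)
      (fun t _ => (hderiv t).hasDerivWithinAt) fun t ht => ?_
    rw [interior_Ici, Set.mem_Ioi] at ht
    have hlip : ⟪g (x + t • v) - g x, v⟫ ≤ L * t * ‖v‖ ^ 2 :=
      calc ⟪g (x + t • v) - g x, v⟫ ≤ ‖g (x + t • v) - g x‖ * ‖v‖ := real_inner_le_norm _ _
        _ ≤ L * ‖t • v‖ * ‖v‖ := by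
          gcongr
          simpa using hg (x + t • v) x
        _ = L * t * ‖v‖ ^ 2 := by rw [norm_smul, Real.norm_of_nonneg ht.le]; ring
    linarith
  have h01 : h 1 ≤ h 0 := hanti Set.self_mem_Ici (Set.mem_Ici.2 zero_le_one) zero_le_one
  simp [h, v] at h01
  linarith

theorem apply_add_smul_sub_le_of_lipschitz_gradient (hφ : ∀ x, HasGradientAt φ (g x) x)
    (hg : ∀ x y, ‖g x - g y‖ ≤ L * ‖x - y‖) (hL : 0 ≤ L) {x d : E}
    (hd : ‖d - g x‖ ^ 2 ≤ C) :
    φ (x + Δ • (d - g x)) ≤ φ x - Δ * ‖g x‖ ^ 2 + Δ * ⟪g x, d⟫ + L / 2 * Δ ^ 2 * C := by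
  have h := le_add_inner_add_sq_of_lipschitz_gradient hφ hg x (x + Δ • (d - g x))
  rw [add_sub_cancel_left, real_inner_smul_right, inner_sub_right, real_inner_self_eq_norm_sq,
    norm_smul, mul_pow, Real.norm_eq_abs, sq_abs] at h
  have : L / 2 * (Δ ^ 2 * ‖d - g x‖ ^ 2) ≤ L / 2 * (Δ ^ 2 * C) := by gcongr
  linarith

theorem mul_sum_norm_sq_le_of_lipschitz_gradient (hφ : ∀ x, HasGradientAt φ (g x) x)
    (hg : ∀ x y, ‖g x - g y‖ ≤ L * ‖x - y‖) (hL : 0 ≤ L) {x d : ℕ → E}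
    (hx : ∀ n, x (n + 1) = x n + Δ • (d n - g (x n))) (hd : ∀ n, ‖d n - g (x n)‖ ^ 2 ≤ C)
    (N : ℕ) :
    Δ * ∑ n ∈ Finset.range N, ‖g (x n)‖ ^ 2 ≤
      φ (x 0) - φ (x N) + Δ * ∑ n ∈ Finset.range N, ⟪g (x n), d n⟫ + N * (L / 2 * Δ ^ 2 * C) := by
  induction N with
  | zero => simp
  | succ N ih =>
    have hstep := hx N ▸ apply_add_smul_sub_le_of_lipschitz_gradient (Δ := Δ) hφ hg hL (hd N)
    rw [Finset.sum_range_succ, Finset.sum_range_succ]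
    push_cast
    linarith

end Descent

theorem sum_eq_zero_of_involutive_of_comp_eq_neg {ι : Type*} [Fintype ι] {σ : ι → ι}
    (hσ : Function.Involutive σ) {f : ι → ℝ} (hf : ∀ i, f (σ i) = -f i) : ∑ i, f i = 0 := by
  have h := Equiv.sum_comp hσ.toPerm f
  simp only [Function.Involutive.coe_toPerm, hf, Finset.sum_neg_distrib] at h
  linarith

section Signs

variable {D : ℕ}

theorem norm_had_sgn_half_sub_sq_le (b : Fin D → Bool) (P M : EuclideanSpace ℝ (Fin D)) :
    ‖had (sgn b) ((1 / 2 : ℝ) • (M + P)) - (1 / 2 : ℝ) • (M - P)‖ ^ 2 ≤ ‖P‖ ^ 2 + ‖M‖ ^ 2 := by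
  simp only [EuclideanSpace.real_norm_sq_eq, ← Finset.sum_add_distrib]
  gcongr with i
  cases hb : b i <;> simp [had, sgn, hb] <;> nlinarith [sq_nonneg (P i), sq_nonneg (M i)]

theorem sgn_not (b : Fin D → Bool) : sgn (fun i => !b i) = -sgn b := by
  ext i
  cases hb : b i <;> simp [sgn, hb]

theorem had_neg_left (x y : EuclideanSpace ℝ (Fin D)) : had (-x) y = -had x y := by
  ext i
  simp [had]

theorem sum_inner_had_sgn_eq_zero {ι : Type*} [Fintype ι] [DecidableEq ι] (i : ι)
    {a b : (ι → Fin D → Bool) → EuclideanSpace ℝ (Fin D)}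
    (ha : ∀ s t, (∀ j ≠ i, s j = t j) → a s = a t) (hb : ∀ s t, (∀ j ≠ i, s j = t j) → b s = b t) :
    ∑ s, ⟪a s, had (sgn (s i)) (b s)⟫ = 0 := by
  let flip : (ι → Fin D → Bool) → ι → Fin D → Bool :=
    fun s => Function.update s i (fun d => !s i d)
  have hflip : ∀ s, ∀ j ≠ i, flip s j = s j := fun s j hj => Function.update_of_ne hj _ _
  refine sum_eq_zero_of_involutive_of_comp_eq_neg (σ := flip) (fun s => ?_) (fun s => ?_)
  · funext j
    rcases eq_or_ne j i with rfl | hj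
    · simp [flip]
    · simp [flip, hj]
  · rw [ha _ _ (hflip s), hb _ _ (hflip s), show flip s i = fun d => !s i d by simp [flip],
      sgn_not, had_neg_left, inner_neg_right]

end Signs

theorem zsIter_congr {D : ℕ} {Δ : ℝ} {F G : EuclideanSpace ℝ (Fin D) → EuclideanSpace ℝ (Fin D)}
    {W0 : EuclideanSpace ℝ (Fin D)} {s t : ℕ → Fin D → Bool} {n : ℕ}
    (h : ∀ k < n, s k = t k) : zsIter Δ F G W0 s n = zsIter Δ F G W0 t n := by
  induction n with
  | zero => rfl
  | succ n ih =>
    simp only [zsIter, ih fun k hk => h k (Nat.lt_succ_of_lt hk), h n (Nat.lt_succ_self n)]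

def signSeq {D N : ℕ} (s : Fin N → Fin D → Bool) : ℕ → Fin D → Bool :=
  fun k => if h : k < N then s ⟨k, h⟩ else fun _ => true

theorem sum_inner_zsIter_signSeq_eq_zero {D N : ℕ} (Δ : ℝ)
    (F G : EuclideanSpace ℝ (Fin D) → EuclideanSpace ℝ (Fin D)) (W0 : EuclideanSpace ℝ (Fin D))
    {n : ℕ} (hn : n < N) :
    ∑ s : Fin N → Fin D → Bool, ⟪G (zsIter Δ F G W0 (signSeq s) n),
      had (sgn (signSeq s n)) (F (zsIter Δ F G W0 (signSeq s) n))⟫ = 0 := by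
  have hdep : ∀ s t : Fin N → Fin D → Bool, (∀ j ≠ ⟨n, hn⟩, s j = t j) →
      zsIter Δ F G W0 (signSeq s) n = zsIter Δ F G W0 (signSeq t) n := fun s t h =>
    zsIter_congr fun k hk => by
      simp only [signSeq, dif_pos (hk.trans hn), h ⟨k, hk.trans hn⟩ (Fin.ne_of_val_ne hk.ne)]
  simp only [signSeq, dif_pos hn]
  exact sum_inner_had_sgn_eq_zero _ (fun s t h => congrArg G (hdep s t h))
    (fun s t h => congrArg F (hdep s t h))

theorem zero_shifting_convergence_rate_general
    (D : ℕ) (Δ qmax Lq : ℝ) (hΔ : 0 < Δ) (hLq : 0 < Lq)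
    (Qp Qm : EuclideanSpace ℝ (Fin D) → EuclideanSpace ℝ (Fin D))
    (hQp : ∀ W, ‖Qp W‖ ≤ qmax) (hQm : ∀ W, ‖Qm W‖ ≤ qmax)
    (F G : EuclideanSpace ℝ (Fin D) → EuclideanSpace ℝ (Fin D))
    (hF : ∀ W, F W = (1 / 2 : ℝ) • (Qm W + Qp W))
    (hG : ∀ W, G W = (1 / 2 : ℝ) • (Qm W - Qp W))
    (φ : EuclideanSpace ℝ (Fin D) → ℝ) (φstar : ℝ)
    (hgrad : ∀ W, HasGradientAt φ (G W) W)
    (hgradLip : ∀ U V, ‖G U - G V‖ ≤ Lq * ‖U - V‖)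
    (hlb : ∀ W, φstar ≤ φ W)
    (W0 : EuclideanSpace ℝ (Fin D)) (N : ℕ) (hN : 1 ≤ N) :
    ((2 : ℝ) ^ (D * N))⁻¹ * ∑ s : Fin N → Fin D → Bool,
        (N : ℝ)⁻¹ * ∑ n ∈ Finset.range N,
          ‖G (zsIter Δ F G W0
                (fun k => if h : k < N then s ⟨k, h⟩ else fun _ => true) n)‖ ^ 2
      ≤ (φ W0 - φstar) / (N * Δ) + Lq * Δ * qmax ^ 2 := by
  set W : (Fin N → Fin D → Bool) → ℕ → EuclideanSpace ℝ (Fin D) :=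
    fun s => zsIter Δ F G W0 (signSeq s)
  set X : (Fin N → Fin D → Bool) → ℕ → ℝ :=
    fun s n => ⟪G (W s n), had (sgn (signSeq s n)) (F (W s n))⟫
  have hdir : ∀ b V, ‖had (sgn b) (F V) - G V‖ ^ 2 ≤ 2 * qmax ^ 2 := fun b V => by
    have hP := pow_le_pow_left₀ (norm_nonneg _) (hQp V) 2
    have hM := pow_le_pow_left₀ (norm_nonneg _) (hQm V) 2
    rw [hF, hG]
    linarith [norm_had_sgn_half_sub_sq_le b (Qp V) (Qm V)]
  have hpath : ∀ s, Δ * ∑ n ∈ Finset.range N, ‖G (W s n)‖ ^ 2 ≤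
      φ W0 - φstar + Δ * ∑ n ∈ Finset.range N, X s n + N * (Lq * Δ ^ 2 * qmax ^ 2) := fun s => by
    have h := mul_sum_norm_sq_le_of_lipschitz_gradient hgrad hgradLip hLq.le (Δ := Δ) (x := W s)
      (d := fun n => had (sgn (signSeq s n)) (F (W s n)))
      (fun n => by simp only [W, zsIter, smul_sub, add_sub_assoc]) (fun n => hdir _ _) N
    have hW0 : W s 0 = W0 := rfl
    rw [hW0] at h
    linarith [hlb (W s N)]
  have hmean : ∑ s, ∑ n ∈ Finset.range N, X s n = 0 := by
    rw [Finset.sum_comm]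
    exact Finset.sum_eq_zero fun n hn =>
      sum_inner_zsIter_signSeq_eq_zero Δ F G W0 (Finset.mem_range.1 hn)
  have htotal := Finset.sum_le_sum fun s (_ : s ∈ Finset.univ) => hpath s
  simp only [← Finset.mul_sum, Finset.sum_add_distrib, hmean, Finset.sum_const,
    Finset.card_univ, Fintype.card_fun, Fintype.card_fin, Fintype.card_bool, nsmul_eq_mul,
    Nat.cast_pow, Nat.cast_ofNat, mul_zero, add_zero] at htotal
  change _ * ∑ s, _ * ∑ n ∈ Finset.range N, ‖G (W s n)‖ ^ 2 ≤ _
  have hN0 : (0 : ℝ) < N := by exact_mod_cast hN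
  rw [← Finset.mul_sum, ← mul_assoc, ← mul_inv, inv_mul_le_iff₀ (by positivity),
    ← mul_le_mul_iff_of_pos_left hΔ, pow_mul]
  calc _ ≤ _ := htotal
    _ = _ := by field_simp

/-- Convergence rate of the stochastic zero-shifting algorithm: averaged over
all `2^{DN}` sign sequences, the mean of `‖G(W_n)‖²` over the first `N` iterates
is at most `(φ(W₀) − φ*)/(NΔ) + L_q Δ q_max²`. -/
theorem zero_shifting_convergence_rate
    (D : ℕ) (hD : 1 ≤ D) (Δ qmax Lq : ℝ) (hΔ : 0 < Δ) (hq : 0 < qmax) (hLq : 0 < Lq)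
    (Qp Qm : EuclideanSpace ℝ (Fin D) → EuclideanSpace ℝ (Fin D))
    (hQp : ∀ W, ‖Qp W‖ ≤ qmax) (hQm : ∀ W, ‖Qm W‖ ≤ qmax)
    (F G : EuclideanSpace ℝ (Fin D) → EuclideanSpace ℝ (Fin D))
    (hF : ∀ W, F W = (1 / 2 : ℝ) • (Qm W + Qp W))
    (hG : ∀ W, G W = (1 / 2 : ℝ) • (Qm W - Qp W))
    (φ : EuclideanSpace ℝ (Fin D) → ℝ) (φstar : ℝ)
    (hgrad : ∀ W, HasGradientAt φ (G W) W)
    (hgradLip : ∀ U V, ‖G U - G V‖ ≤ Lq * ‖U - V‖)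
    (hlb : ∀ W, φstar ≤ φ W)
    (W0 : EuclideanSpace ℝ (Fin D)) (N : ℕ) (hN : 1 ≤ N) :
    ((2 : ℝ) ^ (D * N))⁻¹ * ∑ s : Fin N → Fin D → Bool,
        (N : ℝ)⁻¹ * ∑ n ∈ Finset.range N,
          ‖G (zsIter Δ F G W0
                (fun k => if h : k < N then s ⟨k, h⟩ else fun _ => true) n)‖ ^ 2
      ≤ (φ W0 - φstar) / (N * Δ) + Lq * Δ * qmax ^ 2 :=
  zero_shifting_convergence_rate_general D Δ qmax Lq hΔ hLq Qp Qm hQp hQm F G hF hG φ φstar hgrad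
    hgradLip hlb W0 N hN
end
end

section
/- Two-step descent of the cyclic (alternating up/down pulse) zero-shifting scheme: for any W ∈ ℝ^D, let W' := W + Δ·F(W) − Δ·G(W) (up pulse) and W'' := W' − Δ·F(W') − Δ·G(W') (down pulse). Then φ(W'') ≤ φ(W) − Δ‖G(W)‖² − Δ‖G(W')‖² + 3·L_q·Δ²·q_max². -/
/-!
Write `a = Q₋`, `b = Q₊`, so that `G = (a - b)/2` and the up and down pulses move along `Δ • b`
and `-Δ • a`. By the descent inequality `φ Y ≤ φ X + ⟪∇φ X, Y - X⟫ + L‖Y - X‖²` and the identities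
`⟪G, b⟫ = (‖a‖² - ‖b‖²)/4 - ‖G‖²`, `⟪G, -a⟫ = (‖b‖² - ‖a‖²)/4 - ‖G‖²`, each pulse gains
`-Δ‖G‖²`, and the two cross terms nearly cancel: since `‖W' - W‖ ≤ Δ q_max`, Lipschitz continuity
moves each of `‖a‖²`, `‖b‖²` by at most `2 L_q Δ q_max²`. The cross terms thus cost
`L_q Δ² q_max²`, and each of the two quadratic terms another `L_q Δ² q_max²`.
-/

open InnerProductSpace

section

variable {E F : Type*} [SeminormedAddCommGroup E] [SeminormedAddCommGroup F]

theorem sq_norm_sub_sq_norm_le_of_lipschitz {L q r : ℝ} (hL : 0 ≤ L) {Q : E → F}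
    (hQLip : ∀ U V, ‖Q U - Q V‖ ≤ L * ‖U - V‖) (hQ : ∀ W, ‖Q W‖ ≤ q) {U V : E}
    (hUV : ‖U - V‖ ≤ r) :
    ‖Q U‖ ^ 2 - ‖Q V‖ ^ 2 ≤ 2 * q * (L * r) := by
  have hdiff : ‖Q U‖ - ‖Q V‖ ≤ L * r :=
    (norm_sub_norm_le _ _).trans ((hQLip U V).trans (mul_le_mul_of_nonneg_left hUV hL))
  have hsum : ‖Q U‖ + ‖Q V‖ ≤ 2 * q := by linarith [hQ U, hQ V]
  have hLr : 0 ≤ L * r := mul_nonneg hL ((norm_nonneg _).trans hUV)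
  nlinarith [mul_le_mul hdiff hsum (by positivity) hLr]

end

section

variable {E : Type*} [NormedAddCommGroup E] [InnerProductSpace ℝ E]

theorem real_inner_half_sub_self_right (a b : E) :
    ⟪(1 / 2 : ℝ) • (a - b), b⟫_ℝ = (‖a‖ ^ 2 - ‖b‖ ^ 2) / 4 - ‖(1 / 2 : ℝ) • (a - b)‖ ^ 2 := by
  simp only [← real_inner_self_eq_norm_sq, real_inner_smul_left, real_inner_smul_right,
    inner_sub_left, inner_sub_right, real_inner_comm a b]
  ring

theorem real_inner_half_sub_neg_self_left (a b : E) :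
    ⟪(1 / 2 : ℝ) • (a - b), -a⟫_ℝ = (‖b‖ ^ 2 - ‖a‖ ^ 2) / 4 - ‖(1 / 2 : ℝ) • (a - b)‖ ^ 2 := by
  simp only [← real_inner_self_eq_norm_sq, real_inner_smul_left, real_inner_smul_right,
    inner_sub_left, inner_sub_right, inner_neg_right, real_inner_comm a b]
  ring

variable [CompleteSpace E] {L : ℝ} {φ : E → ℝ} {G : E → E}

/-- The descent lemma, with the constant `L` instead of `L / 2` that the mean value
inequality (rather than integration along the segment) yields. -/
theorem le_add_inner_add_mul_sq_of_gradient_lipschitz (hL : 0 ≤ L)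
    (hgrad : ∀ W, HasGradientAt φ (G W) W) (hgradLip : ∀ U V, ‖G U - G V‖ ≤ L * ‖U - V‖)
    (X Y : E) :
    φ Y ≤ φ X + ⟪G X, Y - X⟫_ℝ + L * ‖Y - X‖ ^ 2 := by
  have hderiv_close : ∀ z ∈ Metric.closedBall X ‖Y - X‖,
      ‖toDual ℝ E (G z) - toDual ℝ E (G X)‖ ≤ L * ‖Y - X‖ := fun z hz => by
    rw [← map_sub, LinearIsometryEquiv.norm_map]
    exact (hgradLip z X).trans (mul_le_mul_of_nonneg_left (mem_closedBall_iff_norm.mp hz) hL)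
  have hmvt := (convex_closedBall X ‖Y - X‖).norm_image_sub_le_of_norm_hasFDerivWithin_le'
    (fun z _ => (hgrad z).hasFDerivAt.hasFDerivWithinAt) hderiv_close
    (Metric.mem_closedBall_self (norm_nonneg _)) (mem_closedBall_iff_norm.mpr le_rfl)
  rw [toDual_apply_apply, Real.norm_eq_abs] at hmvt
  nlinarith [le_abs_self (φ Y - φ X - ⟪G X, Y - X⟫_ℝ)]

theorem le_add_smul_inner_add_mul_sq_of_gradient_lipschitz (hL : 0 ≤ L)
    (hgrad : ∀ W, HasGradientAt φ (G W) W) (hgradLip : ∀ U V, ‖G U - G V‖ ≤ L * ‖U - V‖)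
    (X v : E) (t : ℝ) :
    φ (X + t • v) ≤ φ X + t * ⟪G X, v⟫_ℝ + L * t ^ 2 * ‖v‖ ^ 2 := by
  have h := le_add_inner_add_mul_sq_of_gradient_lipschitz hL hgrad hgradLip X (X + t • v)
  rwa [add_sub_cancel_left, real_inner_smul_right, norm_smul, Real.norm_eq_abs, mul_pow, sq_abs,
    ← mul_assoc] at h

end

theorem cyclic_zero_shifting_two_step_descent_general
    (D : ℕ) (Δ qmax Lq : ℝ) (hΔ : 0 < Δ) (hLq : 0 < Lq)
    (Qp Qm : EuclideanSpace ℝ (Fin D) → EuclideanSpace ℝ (Fin D))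
    (hQpLip : ∀ U V, ‖Qp U - Qp V‖ ≤ Lq * ‖U - V‖)
    (hQmLip : ∀ U V, ‖Qm U - Qm V‖ ≤ Lq * ‖U - V‖)
    (hQp : ∀ W, ‖Qp W‖ ≤ qmax) (hQm : ∀ W, ‖Qm W‖ ≤ qmax)
    (F G : EuclideanSpace ℝ (Fin D) → EuclideanSpace ℝ (Fin D))
    (hF : ∀ W, F W = (1 / 2 : ℝ) • (Qm W + Qp W))
    (hG : ∀ W, G W = (1 / 2 : ℝ) • (Qm W - Qp W))
    (φ : EuclideanSpace ℝ (Fin D) → ℝ)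
    (hgrad : ∀ W, HasGradientAt φ (G W) W)
    (hgradLip : ∀ U V, ‖G U - G V‖ ≤ Lq * ‖U - V‖)
    (W W' W'' : EuclideanSpace ℝ (Fin D))
    (hW' : W' = W + Δ • F W - Δ • G W)
    (hW'' : W'' = W' - Δ • F W' - Δ • G W') :
    φ W'' ≤ φ W - Δ * ‖G W‖ ^ 2 - Δ * ‖G W'‖ ^ 2 + 3 * Lq * Δ ^ 2 * qmax ^ 2 := by
  have hup : W' = W + Δ • Qp W := by rw [hW', hF, hG]; module
  have hdown : W'' = W' + Δ • -Qm W' := by rw [hW'', hF, hG]; module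
  have hup_descent :=
    le_add_smul_inner_add_mul_sq_of_gradient_lipschitz hLq.le hgrad hgradLip W (Qp W) Δ
  have hdown_descent :=
    le_add_smul_inner_add_mul_sq_of_gradient_lipschitz hLq.le hgrad hgradLip W' (-Qm W') Δ
  rw [← hup, hG, real_inner_half_sub_self_right] at hup_descent
  rw [← hdown, hG, real_inner_half_sub_neg_self_left, norm_neg] at hdown_descent
  rw [hG, hG]
  have hstep : ‖W' - W‖ ≤ Δ * qmax := by
    rw [hup, add_sub_cancel_left, norm_smul, Real.norm_of_nonneg hΔ.le]
    exact mul_le_mul_of_nonneg_left (hQp W) hΔ.le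
  have hdrift_m :=
    sq_norm_sub_sq_norm_le_of_lipschitz hLq.le hQmLip hQm (norm_sub_rev W W' ▸ hstep)
  have hdrift_p := sq_norm_sub_sq_norm_le_of_lipschitz hLq.le hQpLip hQp hstep
  have hsq_p : ‖Qp W‖ ^ 2 ≤ qmax ^ 2 := pow_le_pow_left₀ (norm_nonneg _) (hQp W) 2
  have hsq_m : ‖Qm W'‖ ^ 2 ≤ qmax ^ 2 := pow_le_pow_left₀ (norm_nonneg _) (hQm W') 2
  have hLΔ : 0 ≤ Lq * Δ ^ 2 := by positivity
  linarith [mul_le_mul_of_nonneg_left (add_le_add hdrift_m hdrift_p) hΔ.le,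
    mul_le_mul_of_nonneg_left hsq_p hLΔ, mul_le_mul_of_nonneg_left hsq_m hLΔ]

/-- Two-step descent of the cyclic (alternating up/down pulse) zero-shifting
scheme: an up pulse followed by a down pulse decreases `φ` by
`Δ(‖G(W)‖² + ‖G(W')‖²)` up to a `3 L_q Δ² q_max²` error term. -/
theorem cyclic_zero_shifting_two_step_descent
    (D : ℕ) (hD : 1 ≤ D) (Δ qmax Lq : ℝ) (hΔ : 0 < Δ) (hq : 0 < qmax) (hLq : 0 < Lq)
    (Qp Qm : EuclideanSpace ℝ (Fin D) → EuclideanSpace ℝ (Fin D))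
    (hQpLip : ∀ U V, ‖Qp U - Qp V‖ ≤ Lq * ‖U - V‖)
    (hQmLip : ∀ U V, ‖Qm U - Qm V‖ ≤ Lq * ‖U - V‖)
    (hQp : ∀ W, ‖Qp W‖ ≤ qmax) (hQm : ∀ W, ‖Qm W‖ ≤ qmax)
    (F G : EuclideanSpace ℝ (Fin D) → EuclideanSpace ℝ (Fin D))
    (hF : ∀ W, F W = (1 / 2 : ℝ) • (Qm W + Qp W))
    (hG : ∀ W, G W = (1 / 2 : ℝ) • (Qm W - Qp W))
    (φ : EuclideanSpace ℝ (Fin D) → ℝ)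
    (hgrad : ∀ W, HasGradientAt φ (G W) W)
    (hgradLip : ∀ U V, ‖G U - G V‖ ≤ Lq * ‖U - V‖)
    (W W' W'' : EuclideanSpace ℝ (Fin D))
    (hW' : W' = W + Δ • F W - Δ • G W)
    (hW'' : W'' = W' - Δ • F W' - Δ • G W') :
    φ W'' ≤ φ W - Δ * ‖G W‖ ^ 2 - Δ * ‖G W'‖ ^ 2 + 3 * Lq * Δ ^ 2 * qmax ^ 2 :=
  cyclic_zero_shifting_two_step_descent_general D Δ qmax Lq hΔ hLq Qp Qm hQpLip hQmLip hQp hQm F G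
    hF hG φ hgrad hgradLip W W' W'' hW' hW''
end

section
/- Convergence rate of the cyclic zero-shifting algorithm: fix W₀ ∈ ℝ^D and N ≥ 1, and define iterates for n = 0, …, N−1 by W_{2n+1} := W_{2n} + Δ·F(W_{2n}) − Δ·G(W_{2n}) (up pulse) and W_{2n+2} := W_{2n+1} − Δ·F(W_{2n+1}) − Δ·G(W_{2n+1}) (down pulse). Then (1/(2N))·Σ_{n=0}^{2N−1} ‖G(W_n)‖² ≤ (φ(W₀) − φ*)/(2N·Δ) + (3/2)·Δ·L_q·q_max². -/
/-!
Along `t ↦ φ (x + t • d)` the gradient moves by at most `L t ‖d‖`, which gives the descent lemma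
`φ (x + d) ≤ φ x + ⟪G x, d⟫ + L/2 ‖d‖²`. The up pulse steps along `F - G = Q₊` and the down pulse
along `-(F + G) = -Q₋`, so over one pair the first-order terms are `-Δ (‖G x‖² + ‖G x'‖²)` plus
`Δ (⟪G x, F x⟫ - ⟪G x', F x'⟫)`. Since `x' - x = Δ Q₊ x` is small, this cross term is at most
`2 L Δ² q²`, and the two quadratic remainders add `L Δ² q²`. Telescoping over the `N` pairs and
bounding `φ (W (2N))` below by `φ*` gives the rate.
-/

open scoped InnerProductSpace

section Descent

variable {E : Type*} [NormedAddCommGroup E] [InnerProductSpace ℝ E] [CompleteSpace E]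
  {φ : E → ℝ} {G : E → E} {L : ℝ}

theorem apply_add_le_of_lipschitz_gradient (hφ : ∀ w, HasGradientAt φ (G w) w)
    (hG : ∀ u v, ‖G u - G v‖ ≤ L * ‖u - v‖) (x d : E) :
    φ (x + d) ≤ φ x + ⟪G x, d⟫_ℝ + L / 2 * ‖d‖ ^ 2 := by
  set g : ℝ → ℝ := fun t ↦ φ (x + t • d) - t * ⟪G x, d⟫_ℝ - L / 2 * t ^ 2 * ‖d‖ ^ 2
  have hg : ∀ t : ℝ, HasDerivAt g (⟪G (x + t • d), d⟫_ℝ - ⟪G x, d⟫_ℝ - L * t * ‖d‖ ^ 2) t := by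
    intro t
    have hline : HasDerivAt (fun t : ℝ ↦ x + t • d) d t := by
      simpa using ((hasDerivAt_id t).smul_const d).const_add x
    have hφline : HasDerivAt (fun t : ℝ ↦ φ (x + t • d)) ⟪G (x + t • d), d⟫_ℝ t := by
      have h := (hφ (x + t • d)).hasFDerivAt.comp_hasDerivAt t hline
      simp only [InnerProductSpace.toDual_apply_apply] at h
      exact h
    have hquad : HasDerivAt (fun t : ℝ ↦ L / 2 * t ^ 2 * ‖d‖ ^ 2) (L * t * ‖d‖ ^ 2) t :=
      (((hasDerivAt_pow 2 t).const_mul (L / 2)).mul_const (‖d‖ ^ 2)).congr_deriv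
        (by push_cast; ring)
    exact (hφline.sub (hasDerivAt_mul_const _)).sub hquad
  have hanti : AntitoneOn g (Set.Icc 0 1) := by
    refine antitoneOn_of_hasDerivWithinAt_nonpos (convex_Icc 0 1)
      (HasDerivAt.continuousOn fun t _ ↦ hg t) (fun t _ ↦ (hg t).hasDerivWithinAt) ?_
    intro t ht
    rw [interior_Icc] at ht
    have hlip : ‖G (x + t • d) - G x‖ ≤ L * t * ‖d‖ := by
      simpa [norm_smul, abs_of_pos ht.1, mul_assoc] using hG (x + t • d) x
    calc ⟪G (x + t • d), d⟫_ℝ - ⟪G x, d⟫_ℝ - L * t * ‖d‖ ^ 2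
        = ⟪G (x + t • d) - G x, d⟫_ℝ - L * t * ‖d‖ * ‖d‖ := by rw [inner_sub_left]; ring
      _ ≤ ‖G (x + t • d) - G x‖ * ‖d‖ - L * t * ‖d‖ * ‖d‖ := by
        gcongr; exact real_inner_le_norm _ _
      _ ≤ 0 := sub_nonpos.2 (mul_le_mul_of_nonneg_right hlip (norm_nonneg d))
  have h01 := hanti (Set.left_mem_Icc.2 zero_le_one) (Set.right_mem_Icc.2 zero_le_one) zero_le_one
  simp only [g, zero_smul, one_smul, add_zero] at h01
  linarith

theorem apply_add_smul_le_of_lipschitz_gradient (hφ : ∀ w, HasGradientAt φ (G w) w)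
    (hG : ∀ u v, ‖G u - G v‖ ≤ L * ‖u - v‖) (hL : 0 ≤ L) {q : ℝ} {v : E} (hv : ‖v‖ ≤ q)
    (x : E) (Δ : ℝ) : φ (x + Δ • v) ≤ φ x + Δ * ⟪G x, v⟫_ℝ + L / 2 * Δ ^ 2 * q ^ 2 := by
  have hsq : ‖Δ • v‖ ^ 2 ≤ Δ ^ 2 * q ^ 2 := by
    rw [norm_smul, mul_pow, Real.norm_eq_abs, sq_abs]
    gcongr
  have hdescent := apply_add_le_of_lipschitz_gradient hφ hG x (Δ • v)
  rw [real_inner_smul_right] at hdescent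
  linarith [mul_le_mul_of_nonneg_left hsq (by positivity : 0 ≤ L / 2)]

end Descent

section Pulses

variable {E : Type*} [NormedAddCommGroup E] [InnerProductSpace ℝ E]

theorem norm_le_of_norm_add_le_of_norm_sub_le {a b : E} {q : ℝ} (hadd : ‖a + b‖ ≤ q)
    (hsub : ‖a - b‖ ≤ q) : ‖a‖ ≤ q := by
  have ha : a = (1 / 2 : ℝ) • ((a + b) + (a - b)) := by module
  rw [ha, norm_smul, Real.norm_of_nonneg (by norm_num)]
  linarith [norm_add_le (a + b) (a - b)]

theorem lipschitz_half_smul_add {f g : E → E} {L : ℝ} (hf : ∀ u v, ‖f u - f v‖ ≤ L * ‖u - v‖)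
    (hg : ∀ u v, ‖g u - g v‖ ≤ L * ‖u - v‖) (u v : E) :
    ‖(1 / 2 : ℝ) • (f u + g u) - (1 / 2 : ℝ) • (f v + g v)‖ ≤ L * ‖u - v‖ := by
  have hsplit : (1 / 2 : ℝ) • (f u + g u) - (1 / 2 : ℝ) • (f v + g v)
      = (1 / 2 : ℝ) • ((f u - f v) + (g u - g v)) := by module
  rw [hsplit, norm_smul, Real.norm_of_nonneg (by norm_num)]
  linarith [norm_add_le (f u - f v) (g u - g v), hf u v, hg u v]

theorem real_inner_sub_real_inner_le (a b c d : E) :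
    ⟪a, b⟫_ℝ - ⟪c, d⟫_ℝ ≤ ‖a - c‖ * ‖b‖ + ‖c‖ * ‖b - d‖ := by
  have hsplit : ⟪a, b⟫_ℝ - ⟪c, d⟫_ℝ = ⟪a - c, b⟫_ℝ + ⟪c, b - d⟫_ℝ := by
    rw [inner_sub_left, inner_sub_right]; ring
  rw [hsplit]
  exact add_le_add (real_inner_le_norm _ _) (real_inner_le_norm _ _)

variable [CompleteSpace E] {φ : E → ℝ} {F G : E → E} {L q Δ : ℝ}

theorem up_down_pulse_descent (hφ : ∀ w, HasGradientAt φ (G w) w)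
    (hGL : ∀ u v, ‖G u - G v‖ ≤ L * ‖u - v‖) (hFL : ∀ u v, ‖F u - F v‖ ≤ L * ‖u - v‖)
    (hup : ∀ w, ‖F w - G w‖ ≤ q) (hdown : ∀ w, ‖F w + G w‖ ≤ q) (hL : 0 ≤ L) (hΔ : 0 ≤ Δ)
    {x x' x'' : E} (hx' : x' = x + Δ • F x - Δ • G x)
    (hx'' : x'' = x' - Δ • F x' - Δ • G x') :
    φ x'' + (Δ * ‖G x‖ ^ 2 + Δ * ‖G x'‖ ^ 2) ≤ φ x + 3 * L * Δ ^ 2 * q ^ 2 := by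
  have hFx : ‖F x‖ ≤ q := norm_le_of_norm_add_le_of_norm_sub_le (hdown x) (hup x)
  have hGx' : ‖G x'‖ ≤ q := by
    refine norm_le_of_norm_add_le_of_norm_sub_le (b := F x') ?_ ?_
    · rw [add_comm]; exact hdown x'
    · rw [norm_sub_rev]; exact hup x'
  have hx'_eq : x' = x + Δ • (F x - G x) := by rw [hx', smul_sub, add_sub_assoc]
  have hx''_eq : x'' = x' + (-Δ) • (F x' + G x') := by rw [hx'']; module
  have hmove : ‖x - x'‖ ≤ Δ * q := by
    rw [hx'_eq, sub_add_cancel_left, norm_neg, norm_smul, Real.norm_of_nonneg hΔ]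
    exact mul_le_mul_of_nonneg_left (hup x) hΔ
  have hup_step := apply_add_smul_le_of_lipschitz_gradient hφ hGL hL (hup x) x Δ
  have hdown_step := apply_add_smul_le_of_lipschitz_gradient hφ hGL hL (hdown x') x' (-Δ)
  rw [← hx'_eq, inner_sub_right, real_inner_self_eq_norm_sq] at hup_step
  rw [← hx''_eq, inner_add_right, real_inner_self_eq_norm_sq, neg_sq] at hdown_step
  have hcross : ⟪G x, F x⟫_ℝ - ⟪G x', F x'⟫_ℝ ≤ 2 * L * q * (Δ * q) := by
    have hq : 0 ≤ q := (norm_nonneg _).trans hFx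
    have hLmove : L * ‖x - x'‖ ≤ L * (Δ * q) := mul_le_mul_of_nonneg_left hmove hL
    calc ⟪G x, F x⟫_ℝ - ⟪G x', F x'⟫_ℝ ≤ ‖G x - G x'‖ * ‖F x‖ + ‖G x'‖ * ‖F x - F x'‖ :=
          real_inner_sub_real_inner_le _ _ _ _
      _ ≤ L * ‖x - x'‖ * q + q * (L * ‖x - x'‖) := by
          gcongr
          exacts [hGL x x', hFL x x']
      _ ≤ 2 * L * q * (Δ * q) := by nlinarith
  linarith [mul_le_mul_of_nonneg_left hcross hΔ]

end Pulses

theorem add_sum_range_two_mul_le {u g : ℕ → ℝ} {c : ℝ} {N : ℕ}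
    (h : ∀ n < N, u (2 * n + 2) + (g (2 * n) + g (2 * n + 1)) ≤ u (2 * n) + c) :
    u (2 * N) + ∑ n ∈ Finset.range (2 * N), g n ≤ u 0 + N * c := by
  induction N with
  | zero => simp
  | succ m ih =>
    have hprev := ih fun n hn ↦ h n (Nat.lt_succ_of_lt hn)
    have hlast := h m (Nat.lt_succ_self m)
    rw [show 2 * (m + 1) = 2 * m + 1 + 1 by ring, Finset.sum_range_succ, Finset.sum_range_succ]
    push_cast
    linarith

theorem cyclic_zero_shifting_convergence_rate_general
    (D : ℕ) (Δ qmax Lq : ℝ) (hΔ : 0 < Δ) (hLq : 0 < Lq)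
    (Qp Qm : EuclideanSpace ℝ (Fin D) → EuclideanSpace ℝ (Fin D))
    (hQpLip : ∀ U V, ‖Qp U - Qp V‖ ≤ Lq * ‖U - V‖)
    (hQmLip : ∀ U V, ‖Qm U - Qm V‖ ≤ Lq * ‖U - V‖)
    (hQp : ∀ W, ‖Qp W‖ ≤ qmax) (hQm : ∀ W, ‖Qm W‖ ≤ qmax)
    (F G : EuclideanSpace ℝ (Fin D) → EuclideanSpace ℝ (Fin D))
    (hF : ∀ W, F W = (1 / 2 : ℝ) • (Qm W + Qp W))
    (hG : ∀ W, G W = (1 / 2 : ℝ) • (Qm W - Qp W))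
    (φ : EuclideanSpace ℝ (Fin D) → ℝ) (φstar : ℝ)
    (hgrad : ∀ W, HasGradientAt φ (G W) W)
    (hgradLip : ∀ U V, ‖G U - G V‖ ≤ Lq * ‖U - V‖)
    (hlb : ∀ W, φstar ≤ φ W)
    (N : ℕ) (hN : 1 ≤ N)
    (W : ℕ → EuclideanSpace ℝ (Fin D))
    (hup : ∀ n < N, W (2 * n + 1) = W (2 * n) + Δ • F (W (2 * n)) - Δ • G (W (2 * n)))
    (hdown : ∀ n < N,
      W (2 * n + 2) = W (2 * n + 1) - Δ • F (W (2 * n + 1)) - Δ • G (W (2 * n + 1))) :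
    (1 / (2 * N : ℝ)) * ∑ n ∈ Finset.range (2 * N), ‖G (W n)‖ ^ 2
      ≤ (φ (W 0) - φstar) / (2 * N * Δ) + (3 / 2) * Δ * Lq * qmax ^ 2 := by
  have hFL : ∀ U V, ‖F U - F V‖ ≤ Lq * ‖U - V‖ := by
    simpa only [hF] using lipschitz_half_smul_add hQmLip hQpLip
  have hFsubG : ∀ w, ‖F w - G w‖ ≤ qmax := fun w ↦ by
    rw [hF, hG, show (1 / 2 : ℝ) • (Qm w + Qp w) - (1 / 2 : ℝ) • (Qm w - Qp w) = Qp w by module]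
    exact hQp w
  have hFaddG : ∀ w, ‖F w + G w‖ ≤ qmax := fun w ↦ by
    rw [hF, hG, show (1 / 2 : ℝ) • (Qm w + Qp w) + (1 / 2 : ℝ) • (Qm w - Qp w) = Qm w by module]
    exact hQm w
  have htele := add_sum_range_two_mul_le (u := fun n ↦ φ (W n)) (g := fun n ↦ Δ * ‖G (W n)‖ ^ 2)
    fun n hn ↦ up_down_pulse_descent hgrad hgradLip hFL hFsubG hFaddG hLq.le hΔ.le
      (hup n hn) (hdown n hn)
  simp only [← Finset.mul_sum] at htele
  have hbound := hlb (W (2 * N))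
  have hNpos : (0 : ℝ) < N := by exact_mod_cast hN
  calc (1 / (2 * N : ℝ)) * ∑ n ∈ Finset.range (2 * N), ‖G (W n)‖ ^ 2
      = (Δ * ∑ n ∈ Finset.range (2 * N), ‖G (W n)‖ ^ 2) / (2 * N * Δ) := by field_simp
    _ ≤ ((φ (W 0) - φstar) + N * (3 * Lq * Δ ^ 2 * qmax ^ 2)) / (2 * N * Δ) := by
      gcongr; linarith
    _ = (φ (W 0) - φstar) / (2 * N * Δ) + (3 / 2) * Δ * Lq * qmax ^ 2 := by field_simp

/-- Convergence rate of the cyclic zero-shifting algorithm: along the alternating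
up/down pulse iterates, the average of `‖G(W_n)‖²` over the first `2N` iterates
is at most `(φ(W₀) − φ*)/(2NΔ) + (3/2) Δ L_q q_max²`. -/
theorem cyclic_zero_shifting_convergence_rate
    (D : ℕ) (hD : 1 ≤ D) (Δ qmax Lq : ℝ) (hΔ : 0 < Δ) (hq : 0 < qmax) (hLq : 0 < Lq)
    (Qp Qm : EuclideanSpace ℝ (Fin D) → EuclideanSpace ℝ (Fin D))
    (hQpLip : ∀ U V, ‖Qp U - Qp V‖ ≤ Lq * ‖U - V‖)
    (hQmLip : ∀ U V, ‖Qm U - Qm V‖ ≤ Lq * ‖U - V‖)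
    (hQp : ∀ W, ‖Qp W‖ ≤ qmax) (hQm : ∀ W, ‖Qm W‖ ≤ qmax)
    (F G : EuclideanSpace ℝ (Fin D) → EuclideanSpace ℝ (Fin D))
    (hF : ∀ W, F W = (1 / 2 : ℝ) • (Qm W + Qp W))
    (hG : ∀ W, G W = (1 / 2 : ℝ) • (Qm W - Qp W))
    (φ : EuclideanSpace ℝ (Fin D) → ℝ) (φstar : ℝ)
    (hgrad : ∀ W, HasGradientAt φ (G W) W)
    (hgradLip : ∀ U V, ‖G U - G V‖ ≤ Lq * ‖U - V‖)
    (hlb : ∀ W, φstar ≤ φ W)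
    (N : ℕ) (hN : 1 ≤ N)
    (W : ℕ → EuclideanSpace ℝ (Fin D))
    (hup : ∀ n < N, W (2 * n + 1) = W (2 * n) + Δ • F (W (2 * n)) - Δ • G (W (2 * n)))
    (hdown : ∀ n < N,
      W (2 * n + 2) = W (2 * n + 1) - Δ • F (W (2 * n + 1)) - Δ • G (W (2 * n + 1))) :
    (1 / (2 * N : ℝ)) * ∑ n ∈ Finset.range (2 * N), ‖G (W n)‖ ^ 2
      ≤ (φ (W 0) - φstar) / (2 * N * Δ) + (3 / 2) * Δ * Lq * qmax ^ 2 :=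
  cyclic_zero_shifting_convergence_rate_general D Δ qmax Lq hΔ hLq Qp Qm hQpLip hQmLip hQp hQm F G
    hF hG φ φstar hgrad hgradLip hlb N hN W hup hdown
end

section
/- Lipschitz continuity of the analog pulse-update increment in any weighted norm: let q_max > 0 and let f, g ∈ ℝ^D be vectors such that, coordinatewise, 0 ≤ f_d − g_d ≤ q_max and 0 ≤ f_d + g_d ≤ q_max for all d (i.e., the response values q₊ := f − g and q₋ := f + g lie in [0, q_max]). Then for any u, v ∈ ℝ^D and any nonnegative weight vector M ∈ ℝ^D, ‖u ⊙ f − |u| ⊙ g − (v ⊙ f − |v| ⊙ g)‖_M ≤ q_max·‖u − v‖_M, where |u| denotes the coordinatewise absolute value and ⊙ coordinatewise multiplication. -/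
noncomputable section

open scoped BigOperators

/-- Weighted norm `‖W‖_M = sqrt (Σ_d M_d W_d²)` with nonnegative weights `M`. -/
def wnorm {D : ℕ} (M W : Fin D → ℝ) : ℝ :=
  Real.sqrt (∑ d, M d * W d ^ 2)

lemma analog_pointwise (qmax f g u v : ℝ)
    (h1 : 0 ≤ f - g) (h2 : f - g ≤ qmax) (h3 : 0 ≤ f + g) (h4 : f + g ≤ qmax) :
    |(u * f - |u| * g) - (v * f - |v| * g)| ≤ qmax * |u - v| := by
  have hvu := abs_nonneg (u - v)
  have h5 := le_abs_self (u - v)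
  have h6 := neg_abs_le (u - v)
  rw [abs_le]
  rcases le_or_gt 0 u with hu | hu <;> rcases le_or_gt 0 v with hv | hv
  · rw [abs_of_nonneg hu, abs_of_nonneg hv]; constructor <;> nlinarith
  · rw [abs_of_nonneg hu, abs_of_neg hv]; constructor <;> nlinarith
  · rw [abs_of_neg hu, abs_of_nonneg hv]; constructor <;> nlinarith
  · rw [abs_of_neg hu, abs_of_neg hv]; constructor <;> nlinarith

/-- Lipschitz continuity of the analog pulse-update increment
`u ↦ u ⊙ f − |u| ⊙ g` in any weighted norm, with Lipschitz constant `q_max`,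
provided the response values `q₊ = f − g` and `q₋ = f + g` lie in `[0, q_max]`
coordinatewise. -/
theorem analog_update_lipschitz_weighted
    (D : ℕ) (qmax : ℝ) (hq : 0 < qmax) (f g : Fin D → ℝ)
    (hqp_nonneg : ∀ d, 0 ≤ f d - g d) (hqp_le : ∀ d, f d - g d ≤ qmax)
    (hqm_nonneg : ∀ d, 0 ≤ f d + g d) (hqm_le : ∀ d, f d + g d ≤ qmax)
    (u v : Fin D → ℝ) (M : Fin D → ℝ) (hM : ∀ d, 0 ≤ M d) :
    wnorm M (fun d => (u d * f d - |u d| * g d) - (v d * f d - |v d| * g d))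
      ≤ qmax * wnorm M (fun d => u d - v d) := by
  unfold wnorm
  have key : (∑ d, M d * ((u d * f d - |u d| * g d) - (v d * f d - |v d| * g d)) ^ 2)
      ≤ qmax ^ 2 * ∑ d, M d * (u d - v d) ^ 2 := by
    rw [Finset.mul_sum]
    apply Finset.sum_le_sum
    intro d _
    have h := analog_pointwise qmax (f d) (g d) (u d) (v d)
      (hqp_nonneg d) (hqp_le d) (hqm_nonneg d) (hqm_le d)
    have h2 : ((u d * f d - |u d| * g d) - (v d * f d - |v d| * g d)) ^ 2
        ≤ (qmax * |u d - v d|) ^ 2 := by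
      rw [← sq_abs]
      exact pow_le_pow_left₀ (abs_nonneg _) h 2
    calc M d * ((u d * f d - |u d| * g d) - (v d * f d - |v d| * g d)) ^ 2
        ≤ M d * (qmax * |u d - v d|) ^ 2 := by
          exact mul_le_mul_of_nonneg_left h2 (hM d)
      _ = qmax ^ 2 * (M d * (u d - v d) ^ 2) := by rw [mul_pow, sq_abs]; ring
  calc Real.sqrt (∑ d, M d * ((u d * f d - |u d| * g d) - (v d * f d - |v d| * g d)) ^ 2)
      ≤ Real.sqrt (qmax ^ 2 * ∑ d, M d * (u d - v d) ^ 2) := Real.sqrt_le_sqrt key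
    _ = qmax * Real.sqrt (∑ d, M d * (u d - v d) ^ 2) := by
        rw [Real.sqrt_mul (by positivity), Real.sqrt_sq hq.le]
end
end
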